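/- Let v(x) = −(1/c)e^{−cx} with c > 0, and suppose the real-valued processes μ^Z, μ^N, r and ℝⁿ-valued processes σ^Z, σ^N, η (with η in a subspace R) satisfy, for a.e. (t,ω) and all x > 0, the identity μ^Z_t − (1/2)‖η_t − σ^{N,R}_t + σ^{Z,R}_t‖² − c x (r_t − μ^N_t + σ^N_t·η_t − σ^{N,⊥}_t·σ^{Z,⊥}_t) + (c x²/2 − c x)‖σ^{N,⊥}_t‖² = 0. Then necessarily σ^N_t ∈ R, μ^N_t = r_t + σ^N_t·η_t, and μ^Z_t = (1/2)‖η_t − σ^{N,R}_t + σ^{Z,R}_t‖² for a.e. (t,ω). -/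

import Mathlib

/-!
The hypothesis is a quadratic polynomial in `x` vanishing on `(0, ∞)`, so all three of its
coefficients vanish. The leading one is `c/2 ‖σ^{N,⊥}‖²`, whence `σ^N ∈ R`; with `σ^{N,⊥} = 0`
the linear coefficient is `-c (r - μ^N + σ^N·η)`, and the constant one gives `μ^Z`.
-/

theorem eq_zero_of_forall_pos_quadratic_eq_zero {a b d : ℝ}
    (h : ∀ x : ℝ, 0 < x → a + b * x + d * x ^ 2 = 0) : a = 0 ∧ b = 0 ∧ d = 0 := by
  have h1 := h 1 one_pos
  have h2 := h 2 two_pos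
  have h3 := h 3 three_pos
  norm_num at h1 h2 h3
  exact ⟨by linarith, by linarith, by linarith⟩

theorem eq_zero_of_forall_pos_drift_eq_zero {c a k q : ℝ} (hc : 0 < c)
    (h : ∀ x : ℝ, 0 < x → a - c * x * k + (c * x ^ 2 / 2 - c * x) * q = 0) :
    a = 0 ∧ k = 0 ∧ q = 0 := by
  obtain ⟨ha, hb, hd⟩ := eq_zero_of_forall_pos_quadratic_eq_zero (a := a) (b := -c * (k + q))
    (d := c * q / 2) fun x hx => by linear_combination h x hx
  have hq : q = 0 := by simpa [hc.ne'] using hd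
  subst hq
  exact ⟨ha, by simpa [hc.ne'] using hb, rfl⟩

theorem Submodule.mem_of_orthogonalProjectionOnto_orthogonal_eq_zero
    {𝕜 E : Type*} [RCLike 𝕜] [NormedAddCommGroup E] [InnerProductSpace 𝕜 E]
    {K : Submodule 𝕜 E} [K.HasOrthogonalProjection] {v : E}
    (hv : Kᗮ.orthogonalProjectionOnto v = 0) : v ∈ K := by
  rwa [orthogonalProjectionOnto_eq_zero_iff, orthogonal_orthogonal] at hv

theorem stmt_12_general {n : ℕ} (R : Submodule ℝ (EuclideanSpace ℝ (Fin n)))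
    (c μZ μN r : ℝ) (hc : 0 < c)
    (σZ σN η : EuclideanSpace ℝ (Fin n))
    (hpoly : ∀ x : ℝ, 0 < x →
      μZ - (1 / 2) * ‖η - (Submodule.orthogonalProjectionOnto R σN : EuclideanSpace ℝ (Fin n))
          + (Submodule.orthogonalProjectionOnto R σZ : EuclideanSpace ℝ (Fin n))‖ ^ 2
        - c * x * (r - μN + (inner ℝ σN η : ℝ)
            - (inner ℝ ((Submodule.orthogonalProjectionOnto Rᗮ σN : EuclideanSpace ℝ (Fin n)))
                ((Submodule.orthogonalProjectionOnto Rᗮ σZ : EuclideanSpace ℝ (Fin n))) : ℝ))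
        + (c * x ^ 2 / 2 - c * x)
            * ‖(Submodule.orthogonalProjectionOnto Rᗮ σN : EuclideanSpace ℝ (Fin n))‖ ^ 2 = 0) :
    σN ∈ R ∧ μN = r + (inner ℝ σN η : ℝ) ∧
      μZ = (1 / 2) * ‖η - (Submodule.orthogonalProjectionOnto R σN : EuclideanSpace ℝ (Fin n))
          + (Submodule.orthogonalProjectionOnto R σZ : EuclideanSpace ℝ (Fin n))‖ ^ 2 := by
  obtain ⟨hconst, hlin, hlead⟩ := eq_zero_of_forall_pos_drift_eq_zero hc hpoly
  have hσN : σN ∈ R := Submodule.mem_of_orthogonalProjectionOnto_orthogonal_eq_zero <| by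
    simpa only [sq_eq_zero_iff, norm_eq_zero, Submodule.coe_eq_zero] using hlead
  rw [Submodule.orthogonalProjectionOnto_orthogonal_apply_eq_zero hσN] at hlin
  refine ⟨hσN, ?_, by linarith⟩
  simp only [ZeroMemClass.coe_zero, inner_zero_left, sub_zero] at hlin
  linarith

/-- if the exponential-utility drift polynomial in `x` vanishes for all
`x > 0`, then `σ^N ∈ R`, `μ^N = r + σ^N·η` and `μ^Z = ½‖η - σ^{N,R} + σ^{Z,R}‖²`. -/
theorem stmt_12 {n : ℕ} (R : Submodule ℝ (EuclideanSpace ℝ (Fin n)))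
    (c μZ μN r : ℝ) (hc : 0 < c)
    (σZ σN η : EuclideanSpace ℝ (Fin n)) (hη : η ∈ R)
    (hpoly : ∀ x : ℝ, 0 < x →
      μZ - (1 / 2) * ‖η - (Submodule.orthogonalProjectionOnto R σN : EuclideanSpace ℝ (Fin n))
          + (Submodule.orthogonalProjectionOnto R σZ : EuclideanSpace ℝ (Fin n))‖ ^ 2
        - c * x * (r - μN + (inner ℝ σN η : ℝ)
            - (inner ℝ ((Submodule.orthogonalProjectionOnto Rᗮ σN : EuclideanSpace ℝ (Fin n)))
                ((Submodule.orthogonalProjectionOnto Rᗮ σZ : EuclideanSpace ℝ (Fin n))) : ℝ))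
        + (c * x ^ 2 / 2 - c * x)
            * ‖(Submodule.orthogonalProjectionOnto Rᗮ σN : EuclideanSpace ℝ (Fin n))‖ ^ 2 = 0) :
    σN ∈ R ∧ μN = r + (inner ℝ σN η : ℝ) ∧
      μZ = (1 / 2) * ‖η - (Submodule.orthogonalProjectionOnto R σN : EuclideanSpace ℝ (Fin n))
          + (Submodule.orthogonalProjectionOnto R σZ : EuclideanSpace ℝ (Fin n))‖ ^ 2 :=
  stmt_12_general R c μZ μN r hc σZ σN η hpoly
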